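/- If p : Y → X is a right fibration of simplicial sets, then the naturality square of p along every map f : [m] → [n] in Δ with f(m) = n is a pullback of sets; in particular, p is cartesian on all codegeneracy maps and all coface maps except the top coface maps, and hence p is CULF. -/

import Mathlib

open CategoryTheory CategoryTheory.Limits Opposite Simplicial

namespace DecompPaper

def IsActive {a b : SimplexCategory} (f : a ⟶ b) : Prop :=
  f.toOrderHom 0 = 0 ∧ f.toOrderHom (Fin.last a.len) = Fin.last b.len

def IsInert {a b : SimplexCategory} (f : a ⟶ b) : Prop :=
  ∀ i : Fin a.len, (f.toOrderHom i.succ : ℕ) = (f.toOrderHom i.castSucc : ℕ) + 1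

def IsTopPres {a b : SimplexCategory} (f : a ⟶ b) : Prop :=
  f.toOrderHom (Fin.last a.len) = Fin.last b.len

def IsDecomp (X : SSet.{0}) : Prop :=
  ∀ ⦃a b c d : SimplexCategory⦄ (f : a ⟶ b) (g : a ⟶ c) (h : b ⟶ d) (k : c ⟶ d),
    IsActive f → IsInert g → IsPushout f g h k →
      IsPullback (X.map h.op) (X.map k.op) (X.map f.op) (X.map g.op)

def IsCULF {Y X : SSet.{0}} (F : Y ⟶ X) : Prop :=
  ∀ ⦃a b : SimplexCategory⦄ (g : a ⟶ b), IsActive g →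
    IsPullback (Y.map g.op) (F.app (op b)) (F.app (op a)) (X.map g.op)

def IsRightFib {Y X : SSet.{0}} (F : Y ⟶ X) : Prop :=
  ∀ n : ℕ,
    IsPullback (Y.map (SimplexCategory.δ (0 : Fin (n + 2))).op)
      (F.app (op (SimplexCategory.mk (n + 1)))) (F.app (op (SimplexCategory.mk n)))
      (X.map (SimplexCategory.δ (0 : Fin (n + 2))).op)

/-! ### The edgewise subdivision functor `Q` -/

def natApp {m n : ℕ} (f : Fin (m + 1) →o Fin (n + 1)) (t : ℕ) : ℕ :=
  (f ⟨min t m, Nat.lt_succ_of_le (min_le_right t m)⟩ : ℕ)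

lemma natApp_le {m n : ℕ} (f : Fin (m + 1) →o Fin (n + 1)) (t : ℕ) : natApp f t ≤ n :=
  Nat.lt_succ_iff.mp (f _).isLt

lemma natApp_mono {m n : ℕ} (f : Fin (m + 1) →o Fin (n + 1)) {s t : ℕ} (h : s ≤ t) :
    natApp f s ≤ natApp f t :=
  f.monotone (by simp only [Fin.mk_le_mk]; omega)

lemma natApp_of_le {m n : ℕ} (f : Fin (m + 1) →o Fin (n + 1)) {t : ℕ} (h : t ≤ m) :
    natApp f t = (f ⟨t, by omega⟩ : ℕ) := by
  have harg : (⟨min t m, Nat.lt_succ_of_le (min_le_right t m)⟩ : Fin (m + 1)) = ⟨t, by omega⟩ :=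
    Fin.ext (Nat.min_eq_left h)
  unfold natApp
  rw [harg]

lemma natApp_comp {l m n : ℕ} (f : Fin (l + 1) →o Fin (m + 1)) (g : Fin (m + 1) →o Fin (n + 1))
    (t : ℕ) : natApp (g.comp f) t = natApp g (natApp f t) := by
  have h : natApp f t ≤ m := natApp_le f t
  rw [natApp_of_le g h]
  unfold natApp
  rfl

def Qfun {m n : ℕ} (f : Fin (m + 1) →o Fin (n + 1)) : Fin (2 * m + 2) → Fin (2 * n + 2) :=
  fun i =>
    if (i : ℕ) ≤ m then ⟨n - natApp f (m - (i : ℕ)), by omega⟩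
    else ⟨n + 1 + natApp f ((i : ℕ) - (m + 1)), by have := natApp_le f ((i : ℕ) - (m + 1)); omega⟩

lemma Qfun_val_le {m n : ℕ} (f : Fin (m + 1) →o Fin (n + 1)) (i : Fin (2 * m + 2))
    (h : (i : ℕ) ≤ m) : (Qfun f i : ℕ) = n - natApp f (m - (i : ℕ)) := by
  unfold Qfun; rw [if_pos h]

lemma Qfun_val_gt {m n : ℕ} (f : Fin (m + 1) →o Fin (n + 1)) (i : Fin (2 * m + 2))
    (h : ¬ (i : ℕ) ≤ m) : (Qfun f i : ℕ) = n + 1 + natApp f ((i : ℕ) - (m + 1)) := by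
  unfold Qfun; rw [if_neg h]

lemma Qfun_monotone {m n : ℕ} (f : Fin (m + 1) →o Fin (n + 1)) : Monotone (Qfun f) := by
  intro i j hij
  have hij' : (i : ℕ) ≤ (j : ℕ) := hij
  rw [Fin.le_def]
  by_cases hi : (i : ℕ) ≤ m <;> by_cases hj : (j : ℕ) ≤ m
  · rw [Qfun_val_le f i hi, Qfun_val_le f j hj]
    have h1 := natApp_mono f (show m - (j : ℕ) ≤ m - (i : ℕ) by omega)
    have h2 := natApp_le f (m - (i : ℕ))
    omega
  · rw [Qfun_val_le f i hi, Qfun_val_gt f j hj]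
    omega
  · omega
  · rw [Qfun_val_gt f i hi, Qfun_val_gt f j hj]
    have h1 := natApp_mono f (show (i : ℕ) - (m + 1) ≤ (j : ℕ) - (m + 1) by omega)
    omega

def Q : SimplexCategory ⥤ SimplexCategory where
  obj a := SimplexCategory.mk (2 * a.len + 1)
  map {a b} f := SimplexCategory.Hom.mk ⟨Qfun f.toOrderHom, Qfun_monotone f.toOrderHom⟩
  map_id a := by
    apply SimplexCategory.Hom.ext
    apply OrderHom.ext
    funext i
    apply Fin.ext
    show (Qfun (SimplexCategory.Hom.toOrderHom (𝟙 a)) i : ℕ) = (i : ℕ)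
    have hi : (i : ℕ) < 2 * a.len + 2 := i.isLt
    have hid : ∀ t : ℕ, natApp (SimplexCategory.Hom.toOrderHom (𝟙 a)) t = min t a.len :=
      fun t => rfl
    by_cases h : (i : ℕ) ≤ a.len
    · rw [Qfun_val_le _ i h, hid]; omega
    · rw [Qfun_val_gt _ i h, hid]; omega
  map_comp {a b c} f g := by
    apply SimplexCategory.Hom.ext
    apply OrderHom.ext
    funext i
    apply Fin.ext
    show (Qfun (SimplexCategory.Hom.toOrderHom (f ≫ g)) i : ℕ)
        = (Qfun g.toOrderHom (Qfun f.toOrderHom i) : ℕ)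
    have hi : (i : ℕ) < 2 * a.len + 2 := i.isLt
    have h2 : SimplexCategory.Hom.toOrderHom (f ≫ g)
        = g.toOrderHom.comp f.toOrderHom := rfl
    rw [h2]
    by_cases h : (i : ℕ) ≤ a.len
    · have hA := natApp_le f.toOrderHom (a.len - (i : ℕ))
      have hfi : ((Qfun f.toOrderHom i : Fin (2 * b.len + 2)) : ℕ) ≤ b.len := by
        rw [Qfun_val_le _ i h]; omega
      rw [Qfun_val_le _ i h, Qfun_val_le _ _ hfi, Qfun_val_le _ i h, natApp_comp]
      rw [show b.len - (b.len - natApp f.toOrderHom (a.len - (i : ℕ)))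
          = natApp f.toOrderHom (a.len - (i : ℕ)) by omega]
    · have hA := natApp_le f.toOrderHom ((i : ℕ) - (a.len + 1))
      have hfi : ¬ ((Qfun f.toOrderHom i : Fin (2 * b.len + 2)) : ℕ) ≤ b.len := by
        rw [Qfun_val_gt _ i h]; omega
      rw [Qfun_val_gt _ i h, Qfun_val_gt _ _ hfi, Qfun_val_gt _ i h, natApp_comp]
      rw [show b.len + 1 + natApp f.toOrderHom ((i : ℕ) - (a.len + 1)) - (b.len + 1)
          = natApp f.toOrderHom ((i : ℕ) - (a.len + 1)) by omega]

/-- Edgewise subdivision of simplicial sets: precomposition with `Qᵒᵖ`. -/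
def sdF : SSet.{0} ⥤ SSet.{0} :=
  (Functor.whiskeringLeft SimplexCategoryᵒᵖ SimplexCategoryᵒᵖ (Type 0)).obj Q.op

/-- The unique active map `[1] ⟶ [m]`. -/
def act1 (m : ℕ) : SimplexCategory.mk 1 ⟶ SimplexCategory.mk m :=
  SimplexCategory.Hom.mk
    ⟨fun i => if (i : ℕ) = 0 then ⟨0, by omega⟩ else Fin.last m, by
      intro i j hij
      by_cases h : (i : ℕ) = 0
      · by_cases h' : (j : ℕ) = 0 <;> simp [h, h', Fin.le_def]
      · have : (j : ℕ) ≠ 0 := by have := Fin.le_def.mp hij; omega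
        simp [h, this]⟩

/-- The vertex `t` as a map `[0] ⟶ [n]`. -/
def vert (n : ℕ) (t : Fin (n + 1)) : SimplexCategory.mk 0 ⟶ SimplexCategory.mk n :=
  SimplexCategory.Hom.mk (OrderHom.const _ t)

/-- The `i`-th edge inclusion `[1] ⟶ [n]`. -/
def edgeIncl (n : ℕ) (i : Fin n) : SimplexCategory.mk 1 ⟶ SimplexCategory.mk n :=
  SimplexCategory.Hom.mk
    ⟨fun j => ⟨(i : ℕ) + (j : ℕ), by
        have h1 := i.isLt
        have h2 := j.isLt
        simp only [SimplexCategory.len_mk] at h2 ⊢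
        omega⟩, by
      intro x y h
      have := Fin.le_def.mp h
      simp only [Fin.mk_le_mk]
      omega⟩

/-- The set of chains of `k` composable edges in a simplicial set. -/
def SegalChains (X : SSet.{0}) (k : ℕ) : Type :=
  {p : Fin k → X.obj (op (SimplexCategory.mk 1)) //
    ∀ i j : Fin k, (j : ℕ) = (i : ℕ) + 1 →
      X.map (vert 1 1).op (p i) = X.map (vert 1 0).op (p j)}

/-- The spine (Segal) map from `k`-simplices to chains of `k` edges. -/
def spine (X : SSet.{0}) (k : ℕ) (σ : X.obj (op (SimplexCategory.mk k))) : SegalChains X k :=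
  ⟨fun i => X.map (edgeIncl k i).op σ, by
    intro i j hij
    have h1 : vert 1 1 ≫ edgeIncl k i = vert 1 0 ≫ edgeIncl k j := by
      apply SimplexCategory.Hom.ext
      apply OrderHom.ext
      funext z
      apply Fin.ext
      show ((edgeIncl k i).toOrderHom ((vert 1 1).toOrderHom z) : ℕ)
          = ((edgeIncl k j).toOrderHom ((vert 1 0).toOrderHom z) : ℕ)
      show ((i : ℕ) + ((1 : Fin 2) : ℕ)) = ((j : ℕ) + ((0 : Fin 2) : ℕ))
      simp
      omega
    calc X.map (vert 1 1).op (X.map (edgeIncl k i).op σ)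
        = X.map ((vert 1 1 ≫ edgeIncl k i).op) σ := by
          rw [op_comp, FunctorToTypes.map_comp_apply]
      _ = X.map ((vert 1 0 ≫ edgeIncl k j).op) σ := by rw [h1]
      _ = X.map (vert 1 0).op (X.map (edgeIncl k j).op σ) := by
          rw [op_comp, FunctorToTypes.map_comp_apply]⟩


/-! ### The category of decomposition spaces and CULF maps -/

lemma IsCULF.id (X : SSet.{0}) : IsCULF (𝟙 X) := by
  intro a b g hg
  have : (𝟙 X : X ⟶ X).app (op b) = 𝟙 (X.obj (op b)) := rfl
  refine IsPullback.of_vert_isIso ⟨by simp⟩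

lemma IsCULF.comp {X Y Z : SSet.{0}} {f : X ⟶ Y} {g : Y ⟶ Z} (hf : IsCULF f) (hg : IsCULF g) :
    IsCULF (f ≫ g) := by
  intro a b s hs
  simpa using (hf s hs).paste_vert (hg s hs)

/-- The category of decomposition spaces and CULF maps. -/
structure DecompCat : Type 1 where
  X : SSet.{0}
  decomp : IsDecomp X

instance : Category.{0} DecompCat where
  Hom A B := {f : A.X ⟶ B.X // IsCULF f}
  id A := ⟨𝟙 A.X, IsCULF.id A.X⟩
  comp f g := ⟨f.1 ≫ g.1, f.2.comp g.2⟩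
  id_comp f := Subtype.ext (Category.id_comp f.1)
  comp_id f := Subtype.ext (Category.comp_id f.1)
  assoc f g h := Subtype.ext (Category.assoc f.1 g.1 h.1)

/-! ### Discrete fibrations -/

/-- A functor is a discrete fibration if every morphism into the image of an object
has a unique lift with that object as codomain. -/
def IsDiscreteFibration {E C : Type*} [Category E] [Category C] (p : E ⥤ C) : Prop :=
  ∀ (y : E) (c : C) (f : c ⟶ p.obj y),
    ∃! g : Σ x : E, x ⟶ y, ∃ h : p.obj g.1 = c, p.map g.2 = eqToHom h ≫ f

/-- The category of discrete fibrations over `T`, with morphisms the functors over `T`. -/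
structure DFibOver (T : Type) [SmallCategory T] : Type 1 where
  E : Type
  [cat : SmallCategory E]
  p : E ⥤ T
  fib : IsDiscreteFibration p

attribute [instance] DFibOver.cat

instance {T : Type} [SmallCategory T] : Category.{0} (DFibOver T) where
  Hom A B := {G : A.E ⥤ B.E // G ⋙ B.p = A.p}
  id A := ⟨𝟭 A.E, Functor.id_comp A.p⟩
  comp f g := ⟨f.1 ⋙ g.1, by rw [Functor.assoc, g.2, f.2]⟩
  id_comp f := Subtype.ext (Functor.id_comp f.1)
  comp_id f := Subtype.ext (Functor.comp_id f.1)
  assoc f g h := Subtype.ext (Functor.assoc f.1 g.1 h.1)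

/-! ### The category of elements of a simplicial set -/

/-- The category of elements of a simplicial set `X`: objects are simplices of `X`;
a morphism `(m, τ) ⟶ (n, σ)` is a map `f : [m] ⟶ [n]` of `Δ` with `X(f)(σ) = τ`. -/
structure El (X : SSet.{0}) : Type where
  n : ℕ
  σ : X.obj (op (SimplexCategory.mk n))

instance (X : SSet.{0}) : SmallCategory (El X) where
  Hom a b := {f : SimplexCategory.mk a.n ⟶ SimplexCategory.mk b.n // X.map f.op b.σ = a.σ}
  id a := ⟨𝟙 _, by simp⟩
  comp {a b c} f g := ⟨f.1 ≫ g.1, by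
    rw [op_comp, FunctorToTypes.map_comp_apply, g.2, f.2]⟩
  id_comp f := Subtype.ext (Category.id_comp f.1)
  comp_id f := Subtype.ext (Category.comp_id f.1)
  assoc f g h := Subtype.ext (Category.assoc f.1 g.1 h.1)

/-- Functoriality of the category of elements in the simplicial set. -/
def elMap {X Y : SSet.{0}} (f : X ⟶ Y) : El X ⥤ El Y where
  obj e := ⟨e.n, f.app _ e.σ⟩
  map {a b} g := ⟨g.1, by
    have h := FunctorToTypes.naturality f g.1.op b.σ
    dsimp only
    rw [← h, g.2]⟩
  map_id a := Subtype.ext rfl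
  map_comp f g := Subtype.ext rfl

/-- The functor `ω_X : el(sd X) ⥤ el(X)` lying over `Q`. -/
def elSd (X : SSet.{0}) : El (sdF.obj X) ⥤ El X where
  obj e := ⟨2 * e.n + 1, e.σ⟩
  map {a b} g := ⟨Q.map g.1, g.2⟩
  map_id a := Subtype.ext (Q.map_id _)
  map_comp f g := Subtype.ext (Q.map_comp f.1 g.1)

/-- The objects (dimensions) of the chain in `Δ` underlying a `k`-simplex of the nerve of
the category of elements. -/
def chainObj {X : SSet.{0}} {k : ℕ} (F : ComposableArrows (El X) k) : Fin (k + 1) → ℕ :=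
  fun i => (F.obj i).n

/-- The consecutive maps in `Δ` underlying a `k`-simplex of the nerve of the category of
elements. -/
def chainMap {X : SSet.{0}} {k : ℕ} (F : ComposableArrows (El X) k) :
    ∀ i : Fin k, SimplexCategory.mk (chainObj F i.castSucc) ⟶
      SimplexCategory.mk (chainObj F i.succ) :=
  fun i => (F.map (homOfLE (Fin.castSucc_lt_succ (i := i)).le)).1

/-! ### Ladders -/

/-- `IsLadderA n f α` says that `α` is a commutative ladder from the chain of maps
`Q(d⊤) : Q[i] ⟶ Q[i+1]` to the chain `f` with all vertical maps `α i : Q[i] ⟶ [n i]`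
active. -/
def IsLadderA {k : ℕ} (n : Fin (k + 1) → ℕ)
    (f : ∀ i : Fin k, SimplexCategory.mk (n i.castSucc) ⟶ SimplexCategory.mk (n i.succ))
    (α : ∀ i : Fin (k + 1), Q.obj (SimplexCategory.mk (i : ℕ)) ⟶ SimplexCategory.mk (n i)) :
    Prop :=
  (∀ i, IsActive (α i)) ∧
    ∀ i : Fin k, Q.map (SimplexCategory.δ (Fin.last ((i : ℕ) + 1))) ≫ α i.succ
      = α i.castSucc ≫ f i

/-- `IsLadderB n f β` says that `β` is a commutative ladder from the chain of top coface maps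
`d⊤ : [i] ⟶ [i+1]` to the chain `f` with all vertical maps `β i : [i] ⟶ [n i]`
top-preserving. -/
def IsLadderB {k : ℕ} (n : Fin (k + 1) → ℕ)
    (f : ∀ i : Fin k, SimplexCategory.mk (n i.castSucc) ⟶ SimplexCategory.mk (n i.succ))
    (β : ∀ i : Fin (k + 1), SimplexCategory.mk (i : ℕ) ⟶ SimplexCategory.mk (n i)) : Prop :=
  (∀ i, IsTopPres (β i)) ∧
    ∀ i : Fin k, SimplexCategory.δ (Fin.last ((i : ℕ) + 1)) ≫ β i.succ = β i.castSucc ≫ f i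

/-- `IsLambda Λ` says that the family of simplicial maps `Λ X : N(el X) ⟶ sd X` is,
in each degree, given by sending a `k`-simplex `([n₀] → ⋯ → [n_k], σ)` to `X(α_k)(σ)`,
where `α_k : Q[k] ⟶ [n_k]` is the last vertical map of the (unique) active ladder over the
underlying chain in `Δ`. -/
def IsLambda (Λ : ∀ X : SSet.{0}, nerve (El X) ⟶ sdF.obj X) : Prop :=
  ∀ (X : SSet.{0}) (k : ℕ) (F : ComposableArrows (El X) k),
    ∃ α, IsLadderA (chainObj F) (chainMap F) α ∧
      (Λ X).app (op (SimplexCategory.mk k)) F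
        = X.map (α (Fin.last k)).op (F.obj (Fin.last k)).σ

/-! ### The last-segment inclusion and `cod` -/

/-- The last-segment inclusion `[n] ⟶ Q[n] = [2n+1]`. -/
def Lhom (a : SimplexCategory) : a ⟶ Q.obj a :=
  SimplexCategory.Hom.mk
    ⟨fun i => ⟨a.len + 1 + (i : ℕ), by
        have h : (i : ℕ) < a.len + 1 := i.isLt
        exact show a.len + 1 + (i : ℕ) < 2 * a.len + 1 + 1 by omega⟩,
      by intro i j hle; simp only [Fin.mk_le_mk]; have := Fin.le_def.mp hle; exact Fin.le_def.mpr (by dsimp only; omega)⟩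

/-- The natural transformation `id ⇒ Q` given by the last-segment inclusions
`[n] ⟶ [2n+1]`. -/
def Lnat : 𝟭 SimplexCategory ⟶ Q where
  app := Lhom
  naturality a b f := by
    apply SimplexCategory.Hom.ext
    apply OrderHom.ext
    funext i
    apply Fin.ext
    have hi : (i : ℕ) < a.len + 1 := i.isLt
    have h1 : (SimplexCategory.Hom.toOrderHom ((𝟭 SimplexCategory).map f ≫ Lhom b) i : ℕ)
        = b.len + 1 + (f.toOrderHom i : ℕ) := rfl
    have h4 : ((Lhom a).toOrderHom i : ℕ) = a.len + 1 + (i : ℕ) := rfl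
    have key : (SimplexCategory.Hom.toOrderHom (Lhom a ≫ Q.map f) i : ℕ)
        = b.len + 1 + (f.toOrderHom i : ℕ) := by
      have h3 : ¬ ((Lhom a).toOrderHom i : ℕ) ≤ a.len := by omega
      have h5 : (SimplexCategory.Hom.toOrderHom (Lhom a ≫ Q.map f) i : ℕ)
          = (Qfun f.toOrderHom ((Lhom a).toOrderHom i) : ℕ) := rfl
      rw [h5, Qfun_val_gt f.toOrderHom _ h3, h4,
        show a.len + 1 + (i : ℕ) - (a.len + 1) = (i : ℕ) by omega,
        natApp_of_le f.toOrderHom (show (i : ℕ) ≤ a.len by omega)]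
      exact congrArg (fun z : Fin (a.len + 1) => b.len + 1 + (f.toOrderHom z : ℕ))
        (Fin.ext rfl)
    exact h1.trans key.symm

/-- The map `cod_X : sd(X) ⟶ X` induced by the last-segment inclusions. -/
def codN (X : SSet.{0}) : sdF.obj X ⟶ X := Functor.whiskerRight (NatTrans.op Lnat) X

/-! ### Strict pullbacks of categories -/

/-- The strict pullback of a functor `p` along a functor `G`. -/
structure StrictPB {A B C : Type} [SmallCategory A] [SmallCategory B] [SmallCategory C]
    (G : A ⥤ C) (p : B ⥤ C) : Type where
  pt : A
  fib : B
  eq : p.obj fib = G.obj pt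

instance {A B C : Type} [SmallCategory A] [SmallCategory B] [SmallCategory C]
    (G : A ⥤ C) (p : B ⥤ C) : SmallCategory (StrictPB G p) where
  Hom x y := {fg : (x.pt ⟶ y.pt) × (x.fib ⟶ y.fib) //
    p.map fg.2 = eqToHom x.eq ≫ G.map fg.1 ≫ eqToHom y.eq.symm}
  id x := ⟨(𝟙 x.pt, 𝟙 x.fib), by simp⟩
  comp {x y z} f g := ⟨(f.1.1 ≫ g.1.1, f.1.2 ≫ g.1.2), by
    rw [p.map_comp, f.2, g.2, G.map_comp]
    simp⟩
  id_comp f := Subtype.ext (Prod.ext (Category.id_comp f.1.1) (Category.id_comp f.1.2))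
  comp_id f := Subtype.ext (Prod.ext (Category.comp_id f.1.1) (Category.comp_id f.1.2))
  assoc f g h := Subtype.ext (Prod.ext (Category.assoc _ _ _) (Category.assoc _ _ _))

/-- Projection of the strict pullback to the base. -/
def pbProj {A B C : Type} [SmallCategory A] [SmallCategory B] [SmallCategory C]
    (G : A ⥤ C) (p : B ⥤ C) : StrictPB G p ⥤ A where
  obj x := x.pt
  map f := f.1.1
  map_id x := rfl
  map_comp f g := rfl

/-! A right fibration is cartesian along every `d⁰`, hence along their composite
`[0] ⟶ [n]` picking the last vertex. If `f : [m] ⟶ [n]` preserves the top, then the last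
vertex of `[n]` factors as `f` after the last vertex of `[m]`, so `f` is cartesian by
cancellation of pullback squares. Active maps preserve the top. -/

section IsCartesianAt

variable {C D : Type*} [Category C] [Category D] {F G : Cᵒᵖ ⥤ D}

def IsCartesianAt (p : F ⟶ G) {a b : C} (f : a ⟶ b) : Prop :=
  IsPullback (F.map f.op) (p.app (op b)) (p.app (op a)) (G.map f.op)

lemma isCartesianAt_id (p : F ⟶ G) (a : C) : IsCartesianAt p (𝟙 a) := by
  simp only [IsCartesianAt, op_id]
  exact IsPullback.of_horiz_isIso ⟨by simp⟩

lemma IsCartesianAt.comp {p : F ⟶ G} {a b c : C} {f : a ⟶ b} {g : b ⟶ c}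
    (hf : IsCartesianAt p f) (hg : IsCartesianAt p g) : IsCartesianAt p (f ≫ g) := by
  simp only [IsCartesianAt, op_comp, Functor.map_comp]
  exact hg.paste_horiz hf

lemma IsCartesianAt.of_comp {p : F ⟶ G} {a b c : C} {f : a ⟶ b} {g : b ⟶ c}
    (hf : IsCartesianAt p f) (hfg : IsCartesianAt p (f ≫ g)) : IsCartesianAt p g := by
  simp only [IsCartesianAt, op_comp, Functor.map_comp] at hfg
  exact hfg.of_right (p.naturality g.op) hf

end IsCartesianAt

lemma lastVertex_comp_of_isTopPres {a b : SimplexCategory} {f : a ⟶ b} (hf : IsTopPres f) :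
    SimplexCategory.const ⦋0⦌ a (Fin.last a.len) ≫ f =
      SimplexCategory.const ⦋0⦌ b (Fin.last b.len) := by
  rw [SimplexCategory.const_comp, hf]

lemma isTopPres_δ_zero (n : ℕ) : IsTopPres (SimplexCategory.δ (0 : Fin (n + 2))) :=
  Fin.succ_last n

lemma IsRightFib.isCartesianAt_lastVertex {Y X : SSet.{0}} {p : Y ⟶ X} (hp : IsRightFib p)
    (n : ℕ) : IsCartesianAt p (SimplexCategory.const ⦋0⦌ ⦋n⦌ (Fin.last n)) := by
  induction n with
  | zero => simpa using isCartesianAt_id p ⦋0⦌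
  | succ n ih =>
    rw [← lastVertex_comp_of_isTopPres (isTopPres_δ_zero n)]
    exact ih.comp (hp n)

theorem statement4 {Y X : SSet.{0}} (p : Y ⟶ X) (hp : IsRightFib p) :
    (∀ ⦃a b : SimplexCategory⦄ (f : a ⟶ b), IsTopPres f →
      IsPullback (Y.map f.op) (p.app (op b)) (p.app (op a)) (X.map f.op)) ∧
    IsCULF p := by
  have isCartesianAt_of_isTopPres ⦃a b : SimplexCategory⦄ (f : a ⟶ b) (hf : IsTopPres f) :
      IsCartesianAt p f := by
    have hb := hp.isCartesianAt_lastVertex b.len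
    rw [← lastVertex_comp_of_isTopPres hf] at hb
    exact (hp.isCartesianAt_lastVertex a.len).of_comp hb
  exact ⟨isCartesianAt_of_isTopPres, fun _ _ g hg => isCartesianAt_of_isTopPres g hg.2⟩

end DecompPaper
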